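/- A function g : BM^m → Pow(BM^n) is implementable by a circuit with only simple registers (g ∈ Fun_S) if and only if g has a natural subfunction, i.e., a function f : BM^m → Pow(BM^n) that is bit-wise, closed, and specific with f(x) ⊆ g(x) for all x ∈ BM^m. -/

import Mathlib

set_option linter.unusedVariables false

attribute [local instance] Classical.propDecidable

/-- Signal values: stable `zero`, `one`, and metastable `meta`. -/
inductive BM : Type
  | zero
  | one
  | meta'
  deriving DecidableEq

/-- Embedding of stable Boolean values into `BM`. -/
def BM.ofBool : Bool → BM
  | false => BM.zero
  | true => BM.one

/-- `inResM x y` means `y ∈ ResM(x)`, the set of partial resolutions of `x`. -/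
def inResM {k : ℕ} (x y : Fin k → BM) : Prop :=
  ∀ i, x i = y i ∨ x i = BM.meta'

/-- `inRes x y` means `y ∈ Res(x)`, i.e. `y` is a complete (stable) resolution of `x`. -/
def inRes {k : ℕ} (x y : Fin k → BM) : Prop :=
  inResM x y ∧ ∀ i, y i ≠ BM.meta'

/-- The complete resolutions of `x`, viewed as Boolean words. -/
def boolRes {k : ℕ} (x : Fin k → BM) : Set (Fin k → Bool) :=
  { z | ∀ i, x i = BM.ofBool (z i) ∨ x i = BM.meta' }

/-- The metastable (Kleene) extension `f_M : BM^k → BM` of a Boolean function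
`f : B^k → B`: it outputs a stable value `b` iff all complete resolutions of the
input evaluate to `b` under `f`, and `meta` otherwise. -/
noncomputable def kleene {k : ℕ} (f : (Fin k → Bool) → Bool) (x : Fin k → BM) : BM :=
  if ∀ z ∈ boolRes x, f z = false then BM.zero
  else if ∀ z ∈ boolRes x, f z = true then BM.one
  else BM.meta'

/-- Combinational logic with `m` input nodes: formulas built from inputs,
`BM`-constants (gates of indegree 0), and gates computing the metastable extension
of a Boolean function of their in-neighbors.  (A DAG evaluates exactly like the
formula obtained by unsharing, so this faithfully captures evaluation of
combinational logic DAGs.) -/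
inductive Comb (m : ℕ) : Type
  | input : Fin m → Comb m
  | const : BM → Comb m
  | gate : (j : ℕ) → ((Fin j → Bool) → Bool) → (Fin j → Comb m) → Comb m

/-- Recursive evaluation of combinational logic on input `x ∈ BM^m`. -/
noncomputable def Comb.eval {m : ℕ} (x : Fin m → BM) : Comb m → BM
  | .input i => x i
  | .const b => b
  | .gate _ f cs => kleene f (fun t => (cs t).eval x)

/-- Register types: simple, mask-0, mask-1. -/
inductive RegType : Type
  | simple
  | mask0
  | mask1
  deriving DecidableEq

/-- `regRead t b (o, b')` holds iff a register of type `t` in state `b` can be read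
with read value `o`, moving to state `b'`:  a register in a stable state yields that
state and keeps it; a simple register in state `meta` yields `meta` and stays `meta`;
a mask-`c` register in state `meta` either yields `c` staying in state `meta`, or
yields `meta` changing its state to `1 - c`. -/
def regRead : RegType → BM → BM × BM → Prop
  | _, BM.zero, p => p = (BM.zero, BM.zero)
  | _, BM.one, p => p = (BM.one, BM.one)
  | RegType.simple, BM.meta', p => p = (BM.meta', BM.meta')
  | RegType.mask0, BM.meta', p => p = (BM.zero, BM.meta') ∨ p = (BM.meta', BM.one)
  | RegType.mask1, BM.meta', p => p = (BM.one, BM.meta') ∨ p = (BM.meta', BM.zero)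

/-- A circuit with `m` input, `k` local and `n` output registers: a type for each
register, combinational logic with `m + k` input nodes (one per non-output register)
and `k + n` output nodes (one per non-input register), and an initialization of the
non-input registers. -/
structure Circuit (m k n : ℕ) : Type where
  inType : Fin m → RegType
  locType : Fin k → RegType
  outType : Fin n → RegType
  logic : Fin (k + n) → Comb (m + k)
  init : Fin (k + n) → BM

/-- A state of a circuit: values of input, local, and output registers. -/
structure CState (m k n : ℕ) : Type where
  inp : Fin m → BM
  loc : Fin k → BM
  out : Fin n → BM

/-- A state as a word in `BM^{m+k+n}`. -/
def CState.toVec {m k n : ℕ} (s : CState m k n) : Fin (m + (k + n)) → BM :=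
  Fin.append s.inp (Fin.append s.loc s.out)

/-- Read phase: `o ∈ BM^{m+k}` are possible read values of the non-output registers
in state `s`, and `ι'` the corresponding successor states of the input registers. -/
def ReadRel {m k n : ℕ} (C : Circuit m k n) (s : CState m k n)
    (o : Fin (m + k) → BM) (ι' : Fin m → BM) : Prop :=
  (∀ i : Fin m, regRead (C.inType i) (s.inp i) (o (Fin.castAdd k i), ι' i)) ∧
  (∀ j : Fin k, ∃ st', regRead (C.locType j) (s.loc j) (o (Fin.natAdd m j), st'))

/-- Evaluation phase: `f^G` applied to the read values. -/
noncomputable def evalLogic {m k n : ℕ} (C : Circuit m k n) (o : Fin (m + k) → BM) :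
    Fin (k + n) → BM :=
  fun j => (C.logic j).eval o

/-- `Write^C(s)`: possible values written to the non-input registers. -/
def WriteSet {m k n : ℕ} (C : Circuit m k n) (s : CState m k n) :
    Set (Fin (k + n) → BM) :=
  { w | ∃ o ι', ReadRel C s o ι' ∧ inResM (evalLogic C o) w }

/-- Successor-state relation: read all non-output registers, evaluate the logic,
and write an arbitrary partial resolution of the result to the non-input registers. -/
def Succ {m k n : ℕ} (C : Circuit m k n) (s s' : CState m k n) : Prop :=
  ∃ o ι', ReadRel C s o ι' ∧ s'.inp = ι' ∧
    inResM (evalLogic C o) (Fin.append s'.loc s'.out)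

/-- `reach C r s₀ = S^C_r(s₀)`: states reachable in `r` rounds from `s₀`. -/
def reach {m k n : ℕ} (C : Circuit m k n) : ℕ → CState m k n → Set (CState m k n)
  | 0, s => {s}
  | r + 1, s => { t | ∃ u ∈ reach C r s, Succ C u t }

/-- The initial state of `C` with input `ι`. -/
def initState {m k n : ℕ} (C : Circuit m k n) (ι : Fin m → BM) : CState m k n :=
  ⟨ι, fun j => C.init (Fin.castAdd n j), fun j => C.init (Fin.natAdd k j)⟩

/-- `C_r(ι)`: possible outputs after `r` rounds on input `ι`. -/
def Cout {m k n : ℕ} (C : Circuit m k n) (r : ℕ) (ι : Fin m → BM) :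
    Set (Fin n → BM) :=
  { y | ∃ s ∈ reach C r (initState C ι), y = s.out }

/-- `r` rounds of `C` implement `f` iff `C_r(ι) ⊆ f(ι)` for all inputs `ι`. -/
def Implements {m k n : ℕ} (C : Circuit m k n) (r : ℕ)
    (f : (Fin m → BM) → Set (Fin n → BM)) : Prop :=
  ∀ ι, Cout C r ι ⊆ f ι

/-- All registers of the circuit are simple. -/
def OnlySimple {m k n : ℕ} (C : Circuit m k n) : Prop :=
  (∀ i, C.inType i = RegType.simple) ∧ (∀ j, C.locType j = RegType.simple) ∧
    (∀ j, C.outType j = RegType.simple)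

/-- `Fun_S^r`: functions implementable by `r` rounds of circuits with only simple
registers. -/
def FunS (r m n : ℕ) : Set ((Fin m → BM) → Set (Fin n → BM)) :=
  { f | ∃ k, ∃ C : Circuit m k n, OnlySimple C ∧ Implements C r f }

/-- `Fun_M^r`: functions implementable by `r` rounds of circuits with arbitrary
register types. -/
def FunM (r m n : ℕ) : Set ((Fin m → BM) → Set (Fin n → BM)) :=
  { f | ∃ k, ∃ C : Circuit m k n, Implements C r f }

/-- A pivotal sequence over `BM^N`: consecutive elements differ in exactly one bit,
and that bit is `meta` in one of the two elements. -/
def PivotalSeq {N ℓ : ℕ} (x : Fin (ℓ + 1) → Fin N → BM) : Prop :=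
  ∀ i : Fin ℓ,
    ∃ j : Fin N,
      x i.castSucc j ≠ x i.succ j ∧
      (x i.castSucc j = BM.meta' ∨ x i.succ j = BM.meta') ∧
      ∀ j' : Fin N, x i.castSucc j' ≠ x i.succ j' → j' = j

/-- A function `f : BM^m → Pow(BM^n)` is natural iff it is bit-wise and closed
(a product of component functions each taking values in `{{0}, {1}, BM}`)
and specific (stabilizing the input restricts the output). -/
def IsNatural {m n : ℕ} (f : (Fin m → BM) → Set (Fin n → BM)) : Prop :=
  (∃ g : Fin n → (Fin m → BM) → Set BM,
      (∀ i x, g i x = {BM.zero} ∨ g i x = {BM.one} ∨ g i x = (Set.univ : Set BM)) ∧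
      (∀ x, f x = { y | ∀ i, y i ∈ g i x })) ∧
  (∀ x y, inRes x y → f y ⊆ f x)

/-- The `i`-th component of the metastable closure of `f : B^m → B^n`. -/
noncomputable def mclosureC {m n : ℕ} (f : (Fin m → Bool) → Fin n → Bool)
    (x : Fin m → BM) (i : Fin n) : Set BM :=
  if ∀ z ∈ boolRes x, f z i = false then {BM.zero}
  else if ∀ z ∈ boolRes x, f z i = true then {BM.one}
  else Set.univ

/-- The metastable closure `[f]_M : BM^m → Pow(BM^n)` of `f : B^m → B^n`. -/
noncomputable def mclosure {m n : ℕ} (f : (Fin m → Bool) → Fin n → Bool)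
    (x : Fin m → BM) : Set (Fin n → BM) :=
  { y | ∀ i, y i ∈ mclosureC f x i }

/-!
A natural function is exactly `x ↦ ResM(F x)` for some `F : BM^m → BM^n` that preserves
refinement: resolving the input can only resolve the output. One round of a circuit with simple
registers outputs `ResM` of its logic evaluated on the input and the initial local state, and this
preserves refinement because Kleene extensions do. Conversely, such an `F` is refined by the
Kleene extension of its Boolean restriction, which one layer of gates computes: if `F x i` is
stable, then `F z i = F x i` for every Boolean resolution `z` of `x`.
-/

lemma inResM_refl {k : ℕ} (x : Fin k → BM) : inResM x x := fun _ => Or.inl rfl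

lemma inResM_trans {k : ℕ} {x y z : Fin k → BM} (hxy : inResM x y) (hyz : inResM y z) :
    inResM x z := fun i => by
  rcases hxy i with h | h
  · rw [h]; exact hyz i
  · exact Or.inr h

lemma inResM_append_iff {a b : ℕ} {x : Fin (a + b) → BM} {y : Fin a → BM} {z : Fin b → BM} :
    inResM x (Fin.append y z) ↔
      inResM (fun i => x (Fin.castAdd b i)) y ∧ inResM (fun j => x (Fin.natAdd a j)) z := by
  simp only [inResM, Fin.forall_fin_add, Fin.append_left, Fin.append_right]

lemma exists_res_iff_closed {S : Set BM} :
    (∃ v, S = {w | v = w ∨ v = BM.meta'}) ↔ S = {BM.zero} ∨ S = {BM.one} ∨ S = Set.univ := by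
  constructor
  · rintro ⟨v, rfl⟩
    cases v <;> simp [Set.ext_iff, eq_comm]
  · rintro (rfl | rfl | rfl)
    exacts [⟨BM.zero, by simp [eq_comm]⟩, ⟨BM.one, by simp [eq_comm]⟩, ⟨BM.meta', by simp⟩]

def ResMonotone {m n : ℕ} (F : (Fin m → BM) → Fin n → BM) : Prop :=
  ∀ x y, inRes x y → inResM (F x) (F y)

theorem isNatural_iff {m n : ℕ} {f : (Fin m → BM) → Set (Fin n → BM)} :
    IsNatural f ↔ ∃ F, ResMonotone F ∧ ∀ x, f x = {y | inResM (F x) y} := by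
  constructor
  · rintro ⟨⟨gc, hclosed, hbit⟩, hspec⟩
    choose F hF using fun x i => exists_res_iff_closed.mpr (hclosed i x)
    have hf : ∀ x, f x = {y | inResM (F x) y} := fun x => by
      rw [hbit x]
      ext y
      simp only [Set.mem_ofPred_eq, hF x]
      rfl
    refine ⟨F, fun x y hxy => ?_, hf⟩
    have hFy : F y ∈ f x := hspec x y hxy (by rw [hf]; exact inResM_refl _)
    rwa [hf] at hFy
  · rintro ⟨F, hF, hf⟩
    refine ⟨⟨fun i x => {w | F x i = w ∨ F x i = BM.meta'},
      fun i x => exists_res_iff_closed.mp ⟨_, rfl⟩, hf⟩, fun x y hxy => ?_⟩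
    rw [hf, hf]
    exact fun z hz => inResM_trans (hF x y hxy) hz

lemma BM.ofBool_decide_eq_one {v : BM} (hv : v ≠ BM.meta') :
    BM.ofBool (decide (v = BM.one)) = v := by
  cases v <;> simp_all [BM.ofBool]

lemma BM.ofBool_ne_meta (b : Bool) : BM.ofBool b ≠ BM.meta' := by
  cases b <;> simp [BM.ofBool]

lemma boolRes_subset_of_inResM {k : ℕ} {x y : Fin k → BM} (h : inResM x y) :
    boolRes y ⊆ boolRes x := fun z hz i => by
  rcases h i with h' | h'
  · rw [h']; exact hz i
  · exact Or.inr h'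

lemma boolRes_nonempty {k : ℕ} (x : Fin k → BM) : (boolRes x).Nonempty :=
  ⟨fun i => decide (x i = BM.one), fun i => by cases hx : x i <;> simp [hx, BM.ofBool]⟩

lemma inRes_ofBool_of_mem_boolRes {k : ℕ} {x : Fin k → BM} {z : Fin k → Bool}
    (hz : z ∈ boolRes x) : inRes x (fun i => BM.ofBool (z i)) :=
  ⟨hz, fun i => BM.ofBool_ne_meta (z i)⟩

lemma kleene_eq_ofBool {k : ℕ} {f : (Fin k → Bool) → Bool} {x : Fin k → BM} {b : Bool}
    (h : ∀ z ∈ boolRes x, f z = b) : kleene f x = BM.ofBool b := by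
  obtain ⟨z₀, hz₀⟩ := boolRes_nonempty x
  cases b
  · rw [kleene, if_pos h]; rfl
  · have hne : ¬ ∀ z ∈ boolRes x, f z = false := fun h' => by simpa [h z₀ hz₀] using h' z₀ hz₀
    rw [kleene, if_neg hne, if_pos h]; rfl

lemma kleene_eq_or_eq_meta {k : ℕ} (f : (Fin k → Bool) → Bool) {x y : Fin k → BM}
    (h : inResM x y) : kleene f x = kleene f y ∨ kleene f x = BM.meta' := by
  by_cases h0 : ∀ z ∈ boolRes x, f z = false
  · left
    rw [kleene_eq_ofBool h0, kleene_eq_ofBool fun z hz => h0 z (boolRes_subset_of_inResM h hz)]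
  by_cases h1 : ∀ z ∈ boolRes x, f z = true
  · left
    rw [kleene_eq_ofBool h1, kleene_eq_ofBool fun z hz => h1 z (boolRes_subset_of_inResM h hz)]
  · right
    simp [kleene, h0, h1]

lemma Comb.eval_eq_or_eq_meta {m : ℕ} {x y : Fin m → BM} (h : inResM x y) (c : Comb m) :
    c.eval x = c.eval y ∨ c.eval x = BM.meta' := by
  induction c with
  | input i => exact h i
  | const b => exact Or.inl rfl
  | gate j f cs ih => exact kleene_eq_or_eq_meta f ih

def boolRestrict {m n : ℕ} (F : (Fin m → BM) → Fin n → BM) (i : Fin n) (z : Fin m → Bool) :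
    Bool :=
  decide (F (fun j => BM.ofBool (z j)) i = BM.one)

lemma ResMonotone.inResM_kleene_boolRestrict {m n : ℕ} {F : (Fin m → BM) → Fin n → BM}
    (hF : ResMonotone F) (x : Fin m → BM) :
    inResM (F x) (fun i => kleene (boolRestrict F i) x) := fun i => by
  by_cases hx : F x i = BM.meta'
  · exact Or.inr hx
  have hres : ∀ z ∈ boolRes x, boolRestrict F i z = decide (F x i = BM.one) := fun z hz => by
    rw [boolRestrict, (hF _ _ (inRes_ofBool_of_mem_boolRes hz) i).resolve_right hx]
  exact Or.inl ((kleene_eq_ofBool hres).trans (BM.ofBool_decide_eq_one hx)).symm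

section Circuit

variable {m k n : ℕ}

lemma regRead_simple_iff {b : BM} {p : BM × BM} : regRead RegType.simple b p ↔ p = (b, b) := by
  cases b <;> simp [regRead]

lemma readRel_iff_of_onlySimple {C : Circuit m k n} (hC : OnlySimple C) {s : CState m k n}
    {o : Fin (m + k) → BM} {ι' : Fin m → BM} :
    ReadRel C s o ι' ↔ o = Fin.append s.inp s.loc ∧ ι' = s.inp := by
  simp only [ReadRel, hC.1, hC.2.1, regRead_simple_iff, Prod.mk.injEq, exists_eq_right,
    funext_iff, Fin.forall_fin_add, Fin.append_left, Fin.append_right, forall_and]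
  tauto

/-- The values written to the output registers in the first round on input `ι`. -/
noncomputable def firstRoundOutput (C : Circuit m k n) (ι : Fin m → BM) : Fin n → BM :=
  fun i => evalLogic C (Fin.append ι fun j => C.init (Fin.castAdd n j)) (Fin.natAdd k i)

lemma cout_one_eq {C : Circuit m k n} (hC : OnlySimple C) (ι : Fin m → BM) :
    Cout C 1 ι = {y | inResM (firstRoundOutput C ι) y} := by
  ext y
  simp only [Cout, reach, Set.mem_singleton_iff, Set.mem_ofPred_eq, exists_eq_left, Succ,
    readRel_iff_of_onlySimple hC]
  constructor
  · rintro ⟨s, ⟨o, ι', ⟨rfl, rfl⟩, -, hw⟩, rfl⟩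
    exact (inResM_append_iff.mp hw).2
  · intro hy
    exact ⟨⟨ι, fun j => evalLogic C _ (Fin.castAdd n j), y⟩,
      ⟨_, _, ⟨rfl, rfl⟩, rfl, inResM_append_iff.mpr ⟨inResM_refl _, hy⟩⟩, rfl⟩

lemma resMonotone_firstRoundOutput (C : Circuit m k n) : ResMonotone (firstRoundOutput C) :=
  fun x y hxy i => Comb.eval_eq_or_eq_meta
    (inResM_append_iff.mpr ⟨by simpa using hxy.1, by simpa using inResM_refl _⟩) _

def kleeneCircuit (h : Fin n → (Fin m → Bool) → Bool) : Circuit m 0 n where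
  inType _ := RegType.simple
  locType _ := RegType.simple
  outType _ := RegType.simple
  logic := Fin.append Fin.elim0 fun i => Comb.gate m (h i) fun t => Comb.input (Fin.castAdd 0 t)
  init _ := BM.zero

lemma onlySimple_kleeneCircuit (h : Fin n → (Fin m → Bool) → Bool) :
    OnlySimple (kleeneCircuit h) :=
  ⟨fun _ => rfl, fun _ => rfl, fun _ => rfl⟩

lemma firstRoundOutput_kleeneCircuit (h : Fin n → (Fin m → Bool) → Bool) (ι : Fin m → BM) :
    firstRoundOutput (kleeneCircuit h) ι = fun i => kleene (h i) ι := by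
  funext i
  simp only [firstRoundOutput, evalLogic, kleeneCircuit, Fin.append_right, Comb.eval,
    Fin.append_left]

end Circuit

/-- `g ∈ Fun_S` (implementable by a circuit with only simple
registers) iff `g` has a natural subfunction. -/
theorem funS_iff_natural_subfunction {m n : ℕ}
    (g : (Fin m → BM) → Set (Fin n → BM)) :
    g ∈ FunS 1 m n ↔
      ∃ f : (Fin m → BM) → Set (Fin n → BM), IsNatural f ∧ ∀ x, f x ⊆ g x := by
  constructor
  · rintro ⟨k, C, hC, hCg⟩
    exact ⟨_, isNatural_iff.mpr ⟨_, resMonotone_firstRoundOutput C, fun _ => rfl⟩,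
      fun ι => (cout_one_eq hC ι).symm.subset.trans (hCg ι)⟩
  · rintro ⟨f, hf, hfg⟩
    obtain ⟨F, hF, hfF⟩ := isNatural_iff.mp hf
    refine ⟨0, kleeneCircuit (boolRestrict F), onlySimple_kleeneCircuit _, fun ι => ?_⟩
    rw [cout_one_eq (onlySimple_kleeneCircuit _), firstRoundOutput_kleeneCircuit]
    intro y hy
    simp only [hfF] at hfg
    exact hfg ι (inResM_trans (hF.inResM_kleene_boolRestrict ι) hy)
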